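/- Let U ⊆ ℝ³ be a nonempty open set, let a = (a₁, a₂, a₃) : U → ℝ³ be twice continuously differentiable and b = (b₁, b₂, b₃) : U → ℝ³ be continuously differentiable, with the scalar product a·b nonvanishing on U. Let c', c'' ∈ ℝ and suppose that on U: curl a = c'·b (i.e. ∂₂a₃ − ∂₃a₂ = c'b₁, ∂₃a₁ − ∂₁a₃ = c'b₂, ∂₁a₂ − ∂₂a₁ = c'b₃) and div b = c''·(a·b) (i.e. ∂₁b₁ + ∂₂b₂ + ∂₃b₃ = c''·(a₁b₁ + a₂b₂ + a₃b₃)). Then c'·c'' = 0. -/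

import Mathlib

/-!
Since `curl a = c' • b`, the divergence of the left side is `c' • div b = c' c'' (a·b)`; but
`div (curl a) = 0` by the symmetry of second derivatives of the `C²` field `a`. Evaluating at
a point of `U`, where `a·b ≠ 0`, gives `c' c'' = 0`.
-/

/-- Partial derivative in the `i`-th coordinate direction of a function on `ℝⁿ`. -/
noncomputable def pd {n : ℕ} (i : Fin n) (f : (Fin n → ℝ) → ℝ) (x : Fin n → ℝ) : ℝ :=
  fderiv ℝ f x (Pi.single i 1)

section Derivatives

variable {n : ℕ} {f g : (Fin n → ℝ) → ℝ} {x : Fin n → ℝ}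

lemma Filter.EventuallyEq.pd_eq (i : Fin n) (h : f =ᶠ[nhds x] g) : pd i f x = pd i g x := by
  simp only [pd, h.fderiv_eq]

lemma pd_const_mul (i : Fin n) (c : ℝ) : pd i (fun y => c * f y) x = c * pd i f x := by
  rw [pd, show (fun y => c * f y) = c • f from rfl, fderiv_const_smul_field]
  rfl

lemma pd_sub (i : Fin n) (hf : DifferentiableAt ℝ f x) (hg : DifferentiableAt ℝ g x) :
    pd i (fun y => f y - g y) x = pd i f x - pd i g x := by
  simp only [pd, fderiv_fun_sub hf hg, sub_apply]

lemma ContDiffAt.differentiableAt_pd (hf : ContDiffAt ℝ 2 f x) (i : Fin n) :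
    DifferentiableAt ℝ (pd i f) x :=
  ((hf.fderiv_right le_rfl).differentiableAt one_ne_zero).clm_apply (differentiableAt_const _)

lemma ContDiffAt.pd_pd_comm (hf : ContDiffAt ℝ 2 f x) (i j : Fin n) :
    pd i (pd j f) x = pd j (pd i f) x := by
  have hdf : DifferentiableAt ℝ (fderiv ℝ f) x :=
    (hf.fderiv_right le_rfl).differentiableAt one_ne_zero
  have hsnd (v w : Fin n → ℝ) : fderiv ℝ (fun y => fderiv ℝ f y w) x v =
      fderiv ℝ (fderiv ℝ f) x v w := by
    simp [fderiv_clm_apply hdf (differentiableAt_const w)]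
  unfold pd
  rw [hsnd, hsnd, hf.isSymmSndFDerivAt (by simp)]

noncomputable def divergence (b : (Fin n → ℝ) → (Fin n → ℝ)) (x : Fin n → ℝ) : ℝ :=
  ∑ i, pd i (fun y => b y i) x

lemma Filter.EventuallyEq.divergence_eq {b b' : (Fin n → ℝ) → (Fin n → ℝ)}
    (h : b =ᶠ[nhds x] b') : divergence b x = divergence b' x :=
  Finset.sum_congr rfl fun i _ => Filter.EventuallyEq.pd_eq i (h.mono fun _ hy => congrFun hy i)

lemma divergence_const_smul (c : ℝ) (b : (Fin n → ℝ) → (Fin n → ℝ)) :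
    divergence (c • b) x = c * divergence b x := by
  simp only [divergence, Pi.smul_apply, smul_eq_mul, pd_const_mul, Finset.mul_sum]

end Derivatives

noncomputable def curl (a : (Fin 3 → ℝ) → (Fin 3 → ℝ)) (x : Fin 3 → ℝ) : Fin 3 → ℝ :=
  ![pd 1 (fun y => a y 2) x - pd 2 (fun y => a y 1) x,
    pd 2 (fun y => a y 0) x - pd 0 (fun y => a y 2) x,
    pd 0 (fun y => a y 1) x - pd 1 (fun y => a y 0) x]

lemma divergence_curl_eq_zero {a : (Fin 3 → ℝ) → (Fin 3 → ℝ)} {x : Fin 3 → ℝ}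
    (ha : ∀ i, ContDiffAt ℝ 2 (fun y => a y i) x) : divergence (curl a) x = 0 := by
  have hd (i j : Fin 3) := (ha i).differentiableAt_pd j
  simp only [divergence, curl, Fin.sum_univ_three, Matrix.cons_val_zero, Matrix.cons_val_one,
    Matrix.cons_val_two, Matrix.tail_cons, Matrix.head_cons]
  rw [pd_sub 0 (hd 2 1) (hd 1 2), pd_sub 1 (hd 0 2) (hd 2 0), pd_sub 2 (hd 1 0) (hd 0 1),
    (ha 2).pd_pd_comm 0 1, (ha 1).pd_pd_comm 2 0, (ha 0).pd_pd_comm 1 2]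
  ring

theorem stmt18_general (U : Set (Fin 3 → ℝ)) (hU : IsOpen U) (hne : U.Nonempty)
    (a b : (Fin 3 → ℝ) → (Fin 3 → ℝ))
    (ha : ∀ i, ContDiffOn ℝ 2 (fun x => a x i) U)
    (hab : ∀ x ∈ U, (∑ i, a x i * b x i) ≠ 0)
    (c' c'' : ℝ)
    (hcurl : ∀ x ∈ U,
      pd 1 (fun y => a y 2) x - pd 2 (fun y => a y 1) x = c' * b x 0 ∧
      pd 2 (fun y => a y 0) x - pd 0 (fun y => a y 2) x = c' * b x 1 ∧
      pd 0 (fun y => a y 1) x - pd 1 (fun y => a y 0) x = c' * b x 2)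
    (hdiv : ∀ x ∈ U,
      (∑ i, pd i (fun y => b y i) x) = c'' * ∑ i, a x i * b x i) :
    c' * c'' = 0 := by
  obtain ⟨x, hx⟩ := hne
  have hcurl_eq : curl a =ᶠ[nhds x] c' • b := by
    filter_upwards [hU.mem_nhds hx] with y hy
    obtain ⟨h0, h1, h2⟩ := hcurl y hy
    ext i
    fin_cases i <;> simp [curl, h0, h1, h2]
  have hdiv_eq : c' * (c'' * ∑ i, a x i * b x i) = 0 := by
    rw [← hdiv x hx, ← divergence, ← divergence_const_smul, ← hcurl_eq.divergence_eq,
      divergence_curl_eq_zero fun i => (ha i).contDiffAt (hU.mem_nhds hx)]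
  rw [← mul_assoc] at hdiv_eq
  exact (mul_eq_zero.1 hdiv_eq).resolve_right (hab x hx)

/-- On a nonempty open `U ⊆ ℝ³`, if `a` is `C²`, `b` is `C¹`, `a·b` is
nonvanishing, `curl a = c'·b` and `div b = c''·(a·b)` on `U`, then `c'·c'' = 0`
(the Jacobi condition on the two Vessiot structure constants of the contact structure). -/
theorem stmt18 (U : Set (Fin 3 → ℝ)) (hU : IsOpen U) (hne : U.Nonempty)
    (a b : (Fin 3 → ℝ) → (Fin 3 → ℝ))
    (ha : ∀ i, ContDiffOn ℝ 2 (fun x => a x i) U)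
    (hb : ∀ i, ContDiffOn ℝ 1 (fun x => b x i) U)
    (hab : ∀ x ∈ U, (∑ i, a x i * b x i) ≠ 0)
    (c' c'' : ℝ)
    (hcurl : ∀ x ∈ U,
      pd 1 (fun y => a y 2) x - pd 2 (fun y => a y 1) x = c' * b x 0 ∧
      pd 2 (fun y => a y 0) x - pd 0 (fun y => a y 2) x = c' * b x 1 ∧
      pd 0 (fun y => a y 1) x - pd 1 (fun y => a y 0) x = c' * b x 2)
    (hdiv : ∀ x ∈ U,
      (∑ i, pd i (fun y => b y i) x) = c'' * ∑ i, a x i * b x i) :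
    c' * c'' = 0 :=
  stmt18_general U hU hne a b ha hab c' c'' hcurl hdiv
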